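/- Suppose each f_i is L-smooth and convex, and let w* be a minimizer of F = (1/n) Σ_{i=1}^n f_i. Consider a single outer-loop iteration of SARAH with learning rate 0 < η ≤ 1/L. Then for every t ≥ 0 and any outer iteration s ≥ 1, E[F(w_{t+1}^{(s)}) − F(w*)] ≤ E[F(w_t^{(s)}) − F(w*)] − (η/2) E[‖∇F(w_t^{(s)})‖²] + (η/2) (Lη · E[‖v_0^{(s)}‖²] − E[‖v_t^{(s)}‖²]). -/

import Mathlib

noncomputable section

abbrev Vec (d : ℕ) : Type := EuclideanSpace ℝ (Fin d)

/-- One inner loop of SARAH: `(innerSeq d n f F η x0 ι t) = (w_t, v_t)`, where the step from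
`t` to `t+1` uses the sampled index `ι t` (so `ι t` plays the role of `i_{t+1}`). -/
noncomputable def innerSeq (d n : ℕ) (f : Fin n → Vec d → ℝ) (F : Vec d → ℝ) (η : ℝ)
    (x0 : Vec d) (ι : ℕ → Fin n) : ℕ → Vec d × Vec d
  | 0 => (x0, gradient F x0)
  | t + 1 =>
    let p := innerSeq d n f F η x0 ι t
    let w := p.1 - η • p.2
    (w, gradient (f (ι t)) w - gradient (f (ι t)) p.1 + p.2)

/-- Expectation over the first `k` uniformly random indices of a single SARAH inner loop:
the average of `X` over all `ι : Fin k → Fin n`, padded by a dummy index beyond `k`.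
(All quantities appearing below depend only on the first `k` indices.) -/
noncomputable def loopE (n k : ℕ) (hn : 0 < n) (X : (ℕ → Fin n) → ℝ) : ℝ :=
  (∑ ι : Fin k → Fin n, X fun t => if h : t < k then ι ⟨t, h⟩ else ⟨0, hn⟩) /
    (Fintype.card (Fin k → Fin n) : ℝ)

/-!
Applying the descent lemma for `F` along the step `w_{t+1} = w_t - η v_t` gives the claim up to
the error term `(η/2) E‖v_t - ∇F(w_t)‖²`. Conditionally on the past, the increment of the
estimator error `v_k - ∇F(w_k)` has mean zero, so its second moment grows at most by
`E‖v_{k+1} - v_k‖²`. Cocoercivity of each convex `L`-smooth `∇f_i`, together with `Lη ≤ 1`,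
bounds `‖v_{k+1} - v_k‖²` by `Lη (‖v_k‖² - ‖v_{k+1}‖²)`; this telescopes from `v_0 = ∇F(w_0)` to
`E‖v_t - ∇F(w_t)‖² ≤ Lη (‖v_0‖² - E‖v_t‖²)`.
-/

open Finset Set
open scoped BigOperators RealInnerProductSpace

section Smooth

variable {E : Type*} [NormedAddCommGroup E] [InnerProductSpace ℝ E] [CompleteSpace E]
  {φ : E → ℝ} {L : ℝ}

lemma hasDerivAt_comp_lineMap (hφ : Differentiable ℝ φ) (x y : E) (s : ℝ) :
    HasDerivAt (φ ∘ AffineMap.lineMap x y)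
      ⟪gradient φ (AffineMap.lineMap x y s), y - x⟫ s := by
  have h := (hφ _).hasGradientAt.hasFDerivAt.comp_hasDerivAt s
    (AffineMap.hasDerivAt_lineMap (a := x) (b := y))
  rwa [InnerProductSpace.toDual_apply_apply] at h

lemma apply_le_add_inner_gradient_add_sq
    (hφ : Differentiable ℝ φ) (hsmooth : ∀ w w', ‖gradient φ w - gradient φ w'‖ ≤ L * ‖w - w'‖)
    (x y : E) :
    φ y ≤ φ x + ⟪gradient φ x, y - x⟫ + L / 2 * ‖y - x‖ ^ 2 := by
  set g : ℝ → ℝ := fun s =>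
    φ (AffineMap.lineMap x y s) - s * ⟪gradient φ x, y - x⟫ - L / 2 * s ^ 2 * ‖y - x‖ ^ 2
  have hg : ∀ s, HasDerivAt g
      (⟪gradient φ (AffineMap.lineMap x y s) - gradient φ x, y - x⟫ - L * s * ‖y - x‖ ^ 2) s := by
    intro s
    refine (((hasDerivAt_comp_lineMap hφ x y s).sub ((hasDerivAt_id s).mul_const _)).sub
      (((hasDerivAt_pow 2 s).const_mul (L / 2)).mul_const (‖y - x‖ ^ 2))).congr_deriv ?_
    rw [inner_sub_left]
    simp only [Nat.cast_ofNat]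
    ring
  have hanti : AntitoneOn g (Ici 0) := by
    refine antitoneOn_of_hasDerivWithinAt_nonpos (convex_Ici 0)
      (fun s _ => (hg s).continuousAt.continuousWithinAt) (fun s _ => (hg s).hasDerivWithinAt) ?_
    intro s hs
    rw [interior_Ici, Set.mem_Ioi] at hs
    have hnorm : ‖AffineMap.lineMap x y s - x‖ = s * ‖y - x‖ := by
      rw [← vsub_eq_sub, AffineMap.lineMap_vsub_left, norm_smul, Real.norm_of_nonneg hs.le,
        vsub_eq_sub]
    refine sub_nonpos.mpr ?_
    calc ⟪gradient φ (AffineMap.lineMap x y s) - gradient φ x, y - x⟫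
        ≤ ‖gradient φ (AffineMap.lineMap x y s) - gradient φ x‖ * ‖y - x‖ :=
          real_inner_le_norm _ _
      _ ≤ L * (s * ‖y - x‖) * ‖y - x‖ := by
          rw [← hnorm]; exact mul_le_mul_of_nonneg_right (hsmooth _ _) (norm_nonneg _)
      _ = L * s * ‖y - x‖ ^ 2 := by ring
  have hends := hanti (mem_Ici.2 le_rfl) (mem_Ici.2 zero_le_one) zero_le_one
  simp only [g, AffineMap.lineMap_apply_one, AffineMap.lineMap_apply_zero] at hends
  linarith

lemma ConvexOn.apply_add_inner_gradient_le (hconv : ConvexOn ℝ univ φ)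
    (hφ : Differentiable ℝ φ) (x y : E) :
    φ x + ⟪gradient φ x, y - x⟫ ≤ φ y := by
  have hline : ConvexOn ℝ univ (φ ∘ AffineMap.lineMap (k := ℝ) x y) := by
    simpa using hconv.comp_affineMap (AffineMap.lineMap x y : ℝ →ᵃ[ℝ] E)
  have := hline.le_slope_of_hasDerivAt (mem_univ 0) (mem_univ 1) one_pos
    (by simpa only [AffineMap.lineMap_apply_zero] using hasDerivAt_comp_lineMap hφ x y 0)
  simp only [slope_def_field, Function.comp, AffineMap.lineMap_apply_one,
    AffineMap.lineMap_apply_zero, sub_zero, div_one] at this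
  linarith

lemma apply_sub_smul_le (hφ : Differentiable ℝ φ)
    (hsmooth : ∀ w w', ‖gradient φ w - gradient φ w'‖ ≤ L * ‖w - w'‖) (w v : E) (η : ℝ) :
    φ (w - η • v) ≤ φ w - η / 2 * ‖gradient φ w‖ ^ 2 + η / 2 * ‖v - gradient φ w‖ ^ 2
      - η / 2 * (1 - L * η) * ‖v‖ ^ 2 := by
  have hdescent := apply_le_add_inner_gradient_add_sq hφ hsmooth w (w - η • v)
  have hstep : w - η • v - w = -(η • v) := by abel
  rw [hstep, inner_neg_right, real_inner_smul_right, norm_neg, norm_smul, Real.norm_eq_abs,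
    mul_pow, sq_abs] at hdescent
  have hpolar := norm_sub_sq_real v (gradient φ w)
  rw [real_inner_comm] at hpolar
  linear_combination hdescent - η / 2 * hpolar

namespace ConvexOn

variable (hconv : ConvexOn ℝ univ φ) (hφ : Differentiable ℝ φ) (hL : 0 < L)
  (hsmooth : ∀ w w', ‖gradient φ w - gradient φ w'‖ ≤ L * ‖w - w'‖)
include hconv hφ hL hsmooth

-- `z` is one gradient step of the convex function `φ - ⟪∇φ x, ·⟫` from `y`: convexity at `x`
-- bounds `φ z` from below, smoothness at `y` from above.
lemma apply_add_inner_gradient_add_sq_le (x y : E) :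
    φ x + ⟪gradient φ x, y - x⟫ + ‖gradient φ y - gradient φ x‖ ^ 2 / (2 * L) ≤ φ y := by
  set g := gradient φ y - gradient φ x
  set z := y - L⁻¹ • g
  have hlower := hconv.apply_add_inner_gradient_le hφ x z
  have hupper := apply_le_add_inner_gradient_add_sq hφ hsmooth y z
  have hzy : z - y = -(L⁻¹ • g) := by simp only [z]; abel
  have hzx : z - x = (y - x) + (z - y) := by abel
  have hinner : ⟪gradient φ y, z - y⟫ - ⟪gradient φ x, z - y⟫ = -(‖g‖ ^ 2 / L) := by
    rw [← inner_sub_left, hzy, inner_neg_right, real_inner_smul_right,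
      real_inner_self_eq_norm_sq, inv_mul_eq_div]
  have hnorm : L / 2 * ‖z - y‖ ^ 2 = ‖g‖ ^ 2 / (2 * L) := by
    rw [hzy, norm_neg, norm_smul, Real.norm_of_nonneg (inv_nonneg.2 hL.le)]
    field_simp
  have hhalf : ‖g‖ ^ 2 / L = 2 * (‖g‖ ^ 2 / (2 * L)) := by field_simp
  rw [hzx, inner_add_right] at hlower
  linarith

lemma norm_gradient_sub_sq_le_mul_inner (x y : E) :
    ‖gradient φ x - gradient φ y‖ ^ 2 ≤ L * ⟪gradient φ x - gradient φ y, x - y⟫ := by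
  have hxy := apply_add_inner_gradient_add_sq_le hconv hφ hL hsmooth x y
  have hyx := apply_add_inner_gradient_add_sq_le hconv hφ hL hsmooth y x
  have hswap : ⟪gradient φ x, y - x⟫ = -⟪gradient φ x, x - y⟫ := by
    rw [← inner_neg_right, neg_sub]
  rw [norm_sub_rev] at hxy
  rw [← div_le_iff₀' hL, inner_sub_left]
  have h2L : ‖gradient φ x - gradient φ y‖ ^ 2 / L
      = 2 * (‖gradient φ x - gradient φ y‖ ^ 2 / (2 * L)) := by
    field_simp
  linarith

-- For SARAH's update `v' = ∇φ (w - η v) - ∇φ w + v` this reads `‖v' - v‖² ≤ Lη (‖v‖² - ‖v'‖²)`.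
lemma norm_gradient_sub_sq_le_mul_sub {η : ℝ} (hLη : L * η ≤ 1) (w v : E) :
    ‖gradient φ (w - η • v) - gradient φ w‖ ^ 2
      ≤ L * η * (‖v‖ ^ 2 - ‖gradient φ (w - η • v) - gradient φ w + v‖ ^ 2) := by
  set D := gradient φ (w - η • v) - gradient φ w
  have hco := norm_gradient_sub_sq_le_mul_inner hconv hφ hL hsmooth (w - η • v) w
  rw [show w - η • v - w = -(η • v) by abel, inner_neg_right, real_inner_smul_right] at hco
  rw [norm_add_sq_real]
  nlinarith [mul_nonneg (sub_nonneg.2 hLη) (sq_nonneg ‖D‖)]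

end ConvexOn

end Smooth

section FiniteSum

variable {ι E : Type*} [Fintype ι] [NormedAddCommGroup E] [InnerProductSpace ℝ E]

lemma expect_norm_add_sub_sq_le [Nonempty ι] (a : E) (Δ : ι → E) :
    𝔼 j, ‖a + (Δ j - (Fintype.card ι : ℝ)⁻¹ • ∑ i, Δ i)‖ ^ 2 ≤ ‖a‖ ^ 2 + 𝔼 j, ‖Δ j‖ ^ 2 := by
  set N : ℝ := (Fintype.card ι : ℝ)
  set m := N⁻¹ • ∑ i, Δ i
  have hN : 0 < N := by simp only [N]; exact_mod_cast Fintype.card_pos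
  have hsum : ∑ i, Δ i = N • m := by simp only [m, smul_inv_smul₀ hN.ne']
  have hexpand : ∀ j, ‖a + (Δ j - m)‖ ^ 2 = ‖a - m‖ ^ 2 + 2 * ⟪a - m, Δ j⟫ + ‖Δ j‖ ^ 2 := by
    intro j
    rw [← norm_add_sq_real]
    congr 2
    abel
  have hcross : ∑ j, ⟪a - m, Δ j⟫ = N * ⟪a - m, m⟫ := by
    rw [← inner_sum, hsum, real_inner_smul_right]
  have hpolar : ‖a - m‖ ^ 2 + 2 * ⟪a - m, m⟫ = ‖a‖ ^ 2 - ‖m‖ ^ 2 := by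
    rw [norm_sub_sq_real, inner_sub_left, real_inner_self_eq_norm_sq]
    ring
  rw [Fintype.expect_eq_sum_div_card, Fintype.expect_eq_sum_div_card,
    sum_congr rfl fun j _ => hexpand j, sum_add_distrib, sum_add_distrib, ← mul_sum, hcross, sum_const, card_univ, nsmul_eq_mul]
  rw [show N * ‖a - m‖ ^ 2 + 2 * (N * ⟪a - m, m⟫) = N * (‖a‖ ^ 2 - ‖m‖ ^ 2) by
    rw [← hpolar]; ring, add_div, mul_div_cancel_left₀ _ hN.ne']
  linarith [sq_nonneg ‖m‖]

variable [CompleteSpace E] {f : ι → E → ℝ} {F : E → ℝ} {L : ℝ}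

lemma hasGradientAt_of_eq_sum_div (hF : ∀ w, F w = (∑ i, f i w) / Fintype.card ι)
    (hdiff : ∀ i, Differentiable ℝ (f i)) (w : E) :
    HasGradientAt F ((Fintype.card ι : ℝ)⁻¹ • ∑ i, gradient (f i) w) w := by
  rw [show F = fun w => (∑ i, f i w) / Fintype.card ι from funext hF]
  simp only [hasGradientAt_iff_hasFDerivAt, map_smul, map_sum, div_eq_inv_mul]
  exact (HasFDerivAt.fun_sum fun i _ => (hdiff i w).hasGradientAt.hasFDerivAt).const_mul _

variable [Nonempty ι]
  (hgrad : ∀ w, gradient F w = (Fintype.card ι : ℝ)⁻¹ • ∑ i, gradient (f i) w)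
  (hsmooth : ∀ i w w', ‖gradient (f i) w - gradient (f i) w'‖ ≤ L * ‖w - w'‖)
include hgrad hsmooth

lemma norm_gradient_sub_le_of_gradient_eq_average (w w' : E) :
    ‖gradient F w - gradient F w'‖ ≤ L * ‖w - w'‖ := by
  have hN : (0 : ℝ) < Fintype.card ι := by exact_mod_cast Fintype.card_pos
  rw [hgrad, hgrad, ← smul_sub, ← sum_sub_distrib, norm_smul, norm_inv, Real.norm_natCast,
    inv_mul_le_iff₀ hN]
  calc ‖∑ i, (gradient (f i) w - gradient (f i) w')‖
      ≤ ∑ _i : ι, L * ‖w - w'‖ := (norm_sum_le _ _).trans (sum_le_sum fun i _ => hsmooth i w w')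
    _ = Fintype.card ι * (L * ‖w - w'‖) := by simp

-- The centred increments `∇f_j w' - ∇f_j w - (∇F w' - ∇F w)` average to zero, so they only add
-- variance; cocoercivity bounds the uncentred increments by the decrease of `‖v‖²`.
lemma expect_norm_sarah_sub_gradient_sq_le (hconv : ∀ i, ConvexOn ℝ univ (f i))
    (hdiff : ∀ i, Differentiable ℝ (f i)) (hL : 0 < L) {η : ℝ} (hLη : L * η ≤ 1) (w v : E) :
    𝔼 j, ‖gradient (f j) (w - η • v) - gradient (f j) w + v - gradient F (w - η • v)‖ ^ 2
      ≤ ‖v - gradient F w‖ ^ 2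
        + L * η * (‖v‖ ^ 2 - 𝔼 j, ‖gradient (f j) (w - η • v) - gradient (f j) w + v‖ ^ 2) := by
  set D := fun j => gradient (f j) (w - η • v) - gradient (f j) w
  have hcentre : ∀ j, D j + v - gradient F (w - η • v)
      = (v - gradient F w) + (D j - (Fintype.card ι : ℝ)⁻¹ • ∑ i, D i) := by
    intro j
    rw [hgrad, hgrad, sum_sub_distrib, smul_sub]
    abel
  calc 𝔼 j, ‖D j + v - gradient F (w - η • v)‖ ^ 2
      = 𝔼 j, ‖(v - gradient F w) + (D j - (Fintype.card ι : ℝ)⁻¹ • ∑ i, D i)‖ ^ 2 := by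
        simp only [hcentre]
    _ ≤ ‖v - gradient F w‖ ^ 2 + 𝔼 j, ‖D j‖ ^ 2 := expect_norm_add_sub_sq_le _ _
    _ ≤ ‖v - gradient F w‖ ^ 2 + 𝔼 j, L * η * (‖v‖ ^ 2 - ‖D j + v‖ ^ 2) := by
        gcongr with j
        exact (hconv j).norm_gradient_sub_sq_le_mul_sub (hdiff j) hL (hsmooth j) hLη w v
    _ = ‖v - gradient F w‖ ^ 2 + L * η * (‖v‖ ^ 2 - 𝔼 j, ‖D j + v‖ ^ 2) := by
        rw [← mul_expect, expect_sub_distrib, expect_const univ_nonempty]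

end FiniteSum

section Sarah

variable {d n : ℕ} {f : Fin n → Vec d → ℝ} {F : Vec d → ℝ} {η L : ℝ} {x0 : Vec d}

lemma innerSeq_congr {ι ι' : ℕ → Fin n} {k : ℕ} (h : ∀ s < k, ι s = ι' s) :
    innerSeq d n f F η x0 ι k = innerSeq d n f F η x0 ι' k := by
  induction k with
  | zero => rfl
  | succ k ih =>
    simp only [innerSeq]
    rw [ih fun s hs => h s (by omega), h k (by omega)]

lemma innerSeq_update_self (ι : ℕ → Fin n) (k : ℕ) (j : Fin n) :
    innerSeq d n f F η x0 (Function.update ι k j) k = innerSeq d n f F η x0 ι k :=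
  innerSeq_congr fun _ hs => Function.update_of_ne hs.ne _ _

lemma innerSeq_update_succ (ι : ℕ → Fin n) (k : ℕ) (j : Fin n) :
    innerSeq d n f F η x0 (Function.update ι k j) (k + 1)
      = let p := innerSeq d n f F η x0 ι k
        (p.1 - η • p.2, gradient (f j) (p.1 - η • p.2) - gradient (f j) p.1 + p.2) := by
  rw [innerSeq, innerSeq_update_self, Function.update_self]

variable (hn : 0 < n)

def padSeq (k : ℕ) (σ : Fin k → Fin n) : ℕ → Fin n :=
  fun t => if h : t < k then σ ⟨t, h⟩ else ⟨0, hn⟩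

lemma padSeq_snoc (k : ℕ) (σ : Fin k → Fin n) (a : Fin n) :
    padSeq hn (k + 1) (Fin.snoc σ a) = Function.update (padSeq hn k σ) k a := by
  funext t
  rcases lt_trichotomy t k with h | rfl | h
  · rw [Function.update_of_ne h.ne, padSeq, padSeq, dif_pos (by omega), dif_pos h]
    exact Fin.snoc_castSucc (α := fun _ => Fin n) (p := σ) (x := a) (i := ⟨t, h⟩)
  · rw [Function.update_self, padSeq, dif_pos (by omega)]
    exact Fin.snoc_last (α := fun _ => Fin n) ..
  · rw [Function.update_of_ne h.ne', padSeq, padSeq, dif_neg (by omega), dif_neg (by omega)]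

lemma loopE_eq_expect (k : ℕ) (X : (ℕ → Fin n) → ℝ) :
    loopE n k hn X = 𝔼 σ, X (padSeq hn k σ) := by
  rw [loopE, Fintype.expect_eq_sum_div_card]
  rfl

lemma loopE_succ (k : ℕ) (X : (ℕ → Fin n) → ℝ) :
    loopE n (k + 1) hn X = loopE n k hn fun ι => 𝔼 j, X (Function.update ι k j) := by
  rw [loopE_eq_expect, loopE_eq_expect, ← Fintype.expect_equiv (Fin.snocEquiv fun _ => Fin n)
    (fun p => X (padSeq hn (k + 1) (Fin.snoc p.2 p.1))) _ fun _ => rfl, ← univ_product_univ,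
    expect_product, expect_comm]
  simp only [padSeq_snoc]

variable {k : ℕ} {X Y : (ℕ → Fin n) → ℝ}

lemma loopE_const (c : ℝ) : loopE n k hn (fun _ => c) = c := by
  have : Nonempty (Fin n) := ⟨⟨0, hn⟩⟩
  rw [loopE_eq_expect, expect_const univ_nonempty]

lemma loopE_add : loopE n k hn (fun ι => X ι + Y ι) = loopE n k hn X + loopE n k hn Y := by
  simp only [loopE_eq_expect, expect_add_distrib]

lemma loopE_sub : loopE n k hn (fun ι => X ι - Y ι) = loopE n k hn X - loopE n k hn Y := by
  simp only [loopE_eq_expect, expect_sub_distrib]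

lemma loopE_const_mul (c : ℝ) : loopE n k hn (fun ι => c * X ι) = c * loopE n k hn X := by
  simp only [loopE_eq_expect, mul_expect]

lemma loopE_mono (h : ∀ ι, X ι ≤ Y ι) : loopE n k hn X ≤ loopE n k hn Y := by
  simp only [loopE_eq_expect]
  exact expect_le_expect fun σ _ => h _

lemma loopE_norm_sub_gradient_sq_le
    (hgrad : ∀ w, gradient F w = (n : ℝ)⁻¹ • ∑ i, gradient (f i) w)
    (hsmooth : ∀ i w w', ‖gradient (f i) w - gradient (f i) w'‖ ≤ L * ‖w - w'‖)
    (hconv : ∀ i, ConvexOn ℝ univ (f i)) (hdiff : ∀ i, Differentiable ℝ (f i)) (hL : 0 < L)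
    (hLη : L * η ≤ 1) (k : ℕ) :
    loopE n k hn (fun ι => ‖(innerSeq d n f F η x0 ι k).2
        - gradient F (innerSeq d n f F η x0 ι k).1‖ ^ 2)
      ≤ L * η * (‖gradient F x0‖ ^ 2
        - loopE n k hn (fun ι => ‖(innerSeq d n f F η x0 ι k).2‖ ^ 2)) := by
  have : Nonempty (Fin n) := ⟨⟨0, hn⟩⟩
  induction k with
  | zero => simp [innerSeq, loopE_const]
  | succ k ih =>
    have hstep := fun ι => expect_norm_sarah_sub_gradient_sq_le (by simpa using hgrad) hsmooth
      hconv hdiff hL hLη (innerSeq d n f F η x0 ι k).1 (innerSeq d n f F η x0 ι k).2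
    rw [loopE_succ, loopE_succ hn k fun ι => ‖(innerSeq d n f F η x0 ι (k + 1)).2‖ ^ 2]
    simp only [innerSeq_update_succ]
    refine (loopE_mono hn hstep).trans ?_
    rw [loopE_add, loopE_const_mul, loopE_sub]
    linarith

end Sarah

theorem sarah_convex_one_step_general
    (d n : ℕ) (hn : 0 < n)
    (f : Fin n → Vec d → ℝ) (F : Vec d → ℝ)
    (hF : ∀ w, F w = (∑ i, f i w) / n)
    (hdiff : ∀ i, Differentiable ℝ (f i))
    (L : ℝ) (hL : 0 < L)
    (hsmooth : ∀ i, ∀ w w' : Vec d, ‖gradient (f i) w - gradient (f i) w'‖ ≤ L * ‖w - w'‖)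
    (hconv : ∀ i, ConvexOn ℝ Set.univ (f i))
    (wstar : Vec d)
    (η : ℝ) (hη0 : 0 < η) (hη : η ≤ 1 / L)
    (x0 : Vec d) :
    ∀ t : ℕ,
      loopE n t hn (fun ι => F (innerSeq d n f F η x0 ι (t + 1)).1 - F wstar)
        ≤ loopE n t hn (fun ι => F (innerSeq d n f F η x0 ι t).1 - F wstar)
          - η / 2 * loopE n t hn (fun ι => ‖gradient F (innerSeq d n f F η x0 ι t).1‖ ^ 2)
          + η / 2 * (L * η * loopE n t hn (fun ι => ‖(innerSeq d n f F η x0 ι 0).2‖ ^ 2)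
              - loopE n t hn (fun ι => ‖(innerSeq d n f F η x0 ι t).2‖ ^ 2)) := by
  intro t
  have : Nonempty (Fin n) := ⟨⟨0, hn⟩⟩
  have hFgrad (w : Vec d) := hasGradientAt_of_eq_sum_div (by simpa using hF) hdiff w
  have hgradF w := (hFgrad w).gradient
  have hFdiff : Differentiable ℝ F := fun w => (hFgrad w).differentiableAt
  have hLη : L * η ≤ 1 := by rwa [le_div_iff₀ hL, mul_comm] at hη
  have hdescent ι := apply_sub_smul_le hFdiff
    (norm_gradient_sub_le_of_gradient_eq_average hgradF hsmooth)
    (innerSeq d n f F η x0 ι t).1 (innerSeq d n f F η x0 ι t).2 η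
  have hvar := loopE_norm_sub_gradient_sq_le hn (by simpa using hgradF) hsmooth hconv hdiff hL
    hLη (x0 := x0) t
  have hmean := loopE_mono hn (k := t) (fun ι => sub_le_sub_right (hdescent ι) (F wstar))
  simp only [innerSeq, loopE_add, loopE_sub, loopE_const_mul, loopE_const] at hmean ⊢
  nlinarith [mul_le_mul_of_nonneg_left hvar (half_pos hη0).le]

/-- **One-step inequality for SARAH on smooth convex problems** (Statement 7, Lemma 2 of
the paper). If each `f_i` is `L`-smooth and convex, `w*` minimizes `F`, and
`0 < η ≤ 1/L`, then for every `t ≥ 0` (within any single outer loop of SARAH, whose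
starting point `w_0^{(s)} = x0` is arbitrary),
`E[F(w_{t+1}) - F(w*)] ≤ E[F(w_t) - F(w*)] - (η/2)E[‖∇F(w_t)‖²]
  + (η/2)(Lη E[‖v_0‖²] - E[‖v_t‖²])`. -/
theorem sarah_convex_one_step
    (d n : ℕ) (hn : 0 < n)
    (f : Fin n → Vec d → ℝ) (F : Vec d → ℝ)
    (hF : ∀ w, F w = (∑ i, f i w) / n)
    (hdiff : ∀ i, Differentiable ℝ (f i))
    (L : ℝ) (hL : 0 < L)
    (hsmooth : ∀ i, ∀ w w' : Vec d, ‖gradient (f i) w - gradient (f i) w'‖ ≤ L * ‖w - w'‖)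
    (hconv : ∀ i, ConvexOn ℝ Set.univ (f i))
    (wstar : Vec d) (hmin : ∀ w, F wstar ≤ F w)
    (η : ℝ) (hη0 : 0 < η) (hη : η ≤ 1 / L)
    (x0 : Vec d) :
    ∀ t : ℕ,
      loopE n t hn (fun ι => F (innerSeq d n f F η x0 ι (t + 1)).1 - F wstar)
        ≤ loopE n t hn (fun ι => F (innerSeq d n f F η x0 ι t).1 - F wstar)
          - η / 2 * loopE n t hn (fun ι => ‖gradient F (innerSeq d n f F η x0 ι t).1‖ ^ 2)
          + η / 2 * (L * η * loopE n t hn (fun ι => ‖(innerSeq d n f F η x0 ι 0).2‖ ^ 2)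
              - loopE n t hn (fun ι => ‖(innerSeq d n f F η x0 ι t).2‖ ^ 2)) :=
  sarah_convex_one_step_general d n hn f F hF hdiff L hL hsmooth hconv wstar η hη0 hη x0
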